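/- arXiv:2508.19794 — 2 statements merged into one kernel-verified Lean document; each statement's English description precedes it below -/
import Mathlib

section
/- Let F and H be non-isomorphic r-uniform hypergraphs without isolated vertices. Then there exists a hypergraph X that is an edge-induced sub-hypergraph of F or of H such that the number of homomorphisms from F to X differs from the number of homomorphisms from H to X. -/
/-- A hypergraph on a vertex type `V`. -/
structure Hypergraph' (V : Type) where
  edges : Finset (Finset V)

/-- A hypergraph is `r`-uniform if every hyperedge has cardinality `r`. -/
def Hypergraph'.Uniform {V : Type} (G : Hypergraph' V) (r : ℕ) : Prop :=
  ∀ e ∈ G.edges, e.card = r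

/-- No isolated vertices: every vertex lies in some hyperedge. -/
def Hypergraph'.NoIsolated {V : Type} (G : Hypergraph' V) : Prop :=
  ∀ v : V, ∃ e ∈ G.edges, v ∈ e

/-- Number of homomorphisms. -/
noncomputable def homCount {VF VG : Type} [DecidableEq VG]
    (F : Hypergraph' VF) (G : Hypergraph' VG) : ℕ :=
  Nat.card {h : VF → VG // ∀ e ∈ F.edges, e.image h ∈ G.edges}

/-- The edge-induced sub-hypergraph given by a set `J` of hyperedges: its vertex set is
the union of the hyperedges in `J` and its edge set is `J`. -/
def Hypergraph'.induce {V : Type} [DecidableEq V] (B : Hypergraph' V)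
    (J : Finset (Finset V)) : Hypergraph' {v : V // ∃ e ∈ J, v ∈ e} :=
  ⟨J.image (fun e => e.subtype (fun v => ∃ e' ∈ J, v ∈ e'))⟩

/-- Hypergraph isomorphism: a bijection of vertex sets preserving hyperedges in both
directions. -/
def IsIso {α β : Type} [DecidableEq β] (G : Hypergraph' α) (H : Hypergraph' β) : Prop :=
  ∃ a : α ≃ β, ∀ e : Finset α, e ∈ G.edges ↔ e.image a ∈ H.edges

/-!
Since no vertex of `F` is isolated, the homomorphisms `F → B.induce J` are exactly the maps
sending every edge of `F` into `J`. If `F` and `H` have equal such counts for every `J ⊆ B.edges`,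
Möbius inversion over the subsets of `B.edges` shows that they also have equally many maps whose
edge image is exactly `J`. For `B = F` and `J = F.edges` the identity of `F` is such a map, so
there is an edge-surjective homomorphism `H → F`; symmetrically one `F → H`, and two
edge-surjective homomorphisms in opposite directions between finite hypergraphs without isolated
vertices yield an isomorphism.
-/

namespace Hypergraph'

variable {VF VH VB : Type}

def edgeImage [DecidableEq VB] (F : Hypergraph' VF) (h : VF → VB) : Finset (Finset VB) :=
  F.edges.image (·.image h)

section edgeImage

variable [DecidableEq VB] {F : Hypergraph' VF}

@[simp]
lemma mem_edgeImage {h : VF → VB} {t : Finset VB} :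
    t ∈ F.edgeImage h ↔ ∃ e ∈ F.edges, e.image h = t :=
  Finset.mem_image

@[simp]
lemma edgeImage_id [DecidableEq VF] : F.edgeImage id = F.edges := by
  simp [edgeImage]

lemma edgeImage_subset_iff {h : VF → VB} {J : Finset (Finset VB)} :
    F.edgeImage h ⊆ J ↔ ∀ e ∈ F.edges, e.image h ∈ J :=
  Finset.image_subset_iff

lemma edgeImage_comp [DecidableEq VH] (f : VF → VH) (g : VH → VB) :
    F.edgeImage (g ∘ f) = (F.edgeImage f).image (·.image g) := by
  simp only [edgeImage, Finset.image_image, Function.comp_def]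

lemma surjective_of_edgeImage_eq {G : Hypergraph' VB} (hG : G.NoIsolated) {f : VF → VB}
    (hf : F.edgeImage f = G.edges) : Function.Surjective f := by
  intro w
  obtain ⟨t, ht, hw⟩ := hG w
  obtain ⟨e, -, rfl⟩ := mem_edgeImage.mp (hf ▸ ht)
  obtain ⟨v, -, hv⟩ := Finset.mem_image.mp hw
  exact ⟨v, hv⟩

end edgeImage

/-- The composite `g ∘ f` is an edge-surjective, hence (`VF` being finite) bijective,
self-map of `F`; so `f` is a bijection, and an edge `e.image (g ∘ f)` of `F` can only come
from an edge `e` of `F`. -/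
theorem isIso_of_edgeImage_eq [Finite VF] [DecidableEq VF] [DecidableEq VH]
    {F : Hypergraph' VF} {H : Hypergraph' VH} (hF : F.NoIsolated) (hH : H.NoIsolated)
    {f : VF → VH} {g : VH → VF} (hf : F.edgeImage f = H.edges) (hg : H.edgeImage g = F.edges) :
    IsIso F H := by
  have hgf : F.edgeImage (g ∘ f) = F.edges := by rw [edgeImage_comp, hf]; exact hg
  have hfg : H.edgeImage (f ∘ g) = H.edges := by rw [edgeImage_comp, hg]; exact hf
  have hgf_inj : Function.Injective (g ∘ f) :=
    Finite.injective_iff_surjective.mpr (surjective_of_edgeImage_eq hF hgf)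
  have hf_bij : Function.Bijective f :=
    ⟨hgf_inj.of_comp, (surjective_of_edgeImage_eq hH hfg).of_comp⟩
  refine ⟨Equiv.ofBijective f hf_bij, fun e => ⟨fun he => ?_, fun he => ?_⟩⟩
  · exact hf ▸ mem_edgeImage.mpr ⟨e, he, rfl⟩
  · have : e.image (g ∘ f) ∈ F.edgeImage (g ∘ f) := by
      rw [hgf, ← Finset.image_image, ← hg]
      exact mem_edgeImage.mpr ⟨_, he, rfl⟩
    obtain ⟨e₀, he₀, he₀e⟩ := mem_edgeImage.mp this
    rwa [← Finset.image_injective hgf_inj he₀e]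

lemma mem_induce_edges_iff [DecidableEq VB] (B : Hypergraph' VB) (J : Finset (Finset VB))
    (s : Finset {v : VB // ∃ e ∈ J, v ∈ e}) :
    s ∈ (B.induce J).edges ↔ s.map (Function.Embedding.subtype _) ∈ J := by
  have hmap : ∀ t ∈ J, (t.subtype fun v => ∃ e ∈ J, v ∈ e).map
      (Function.Embedding.subtype _) = t :=
    fun t ht => Finset.subtype_map_of_mem fun v hv => ⟨t, ht, hv⟩
  simp only [induce, Finset.mem_image]
  constructor
  · rintro ⟨t, ht, rfl⟩
    rwa [hmap t ht]
  · intro hs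
    exact ⟨_, hs, Finset.map_injective (Function.Embedding.subtype _) (hmap _ hs)⟩

/-- Since `F` has no isolated vertices, a map sending every edge of `F` into `J` takes values
in the vertex set of `B.induce J`. -/
lemma homCount_induce [DecidableEq VB] {F : Hypergraph' VF} (hF : F.NoIsolated)
    (B : Hypergraph' VB) (J : Finset (Finset VB)) :
    homCount F (B.induce J) = Nat.card {h : VF → VB // F.edgeImage h ⊆ J} := by
  have himage : ∀ (h : VF → {v : VB // ∃ e ∈ J, v ∈ e}) (e : Finset VF),
      (e.image h).map (Function.Embedding.subtype _) = e.image (Subtype.val ∘ h) := by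
    intro h e
    rw [Finset.map_eq_image, Finset.image_image]
    rfl
  refine Nat.card_congr
    { toFun := fun h => ⟨Subtype.val ∘ h.1, edgeImage_subset_iff.mpr fun e he => ?_⟩
      invFun := fun h => ⟨fun v => ⟨h.1 v, ?_⟩, fun e he => ?_⟩
      left_inv := fun _ => rfl
      right_inv := fun _ => rfl }
  · rw [← himage]
    exact (mem_induce_edges_iff B J _).mp (h.2 e he)
  · obtain ⟨e, he, hv⟩ := hF v
    exact ⟨e.image h.1, edgeImage_subset_iff.mp h.2 e he, Finset.mem_image_of_mem _ hv⟩
  · rw [mem_induce_edges_iff, himage]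
    exact edgeImage_subset_iff.mp h.2 e he

lemma card_edgeImage_subset [Fintype VF] [Fintype VB] [DecidableEq VB]
    (F : Hypergraph' VF) (J : Finset (Finset VB)) :
    Nat.card {h : VF → VB // F.edgeImage h ⊆ J} =
      ∑ K ∈ J.powerset, Nat.card {h : VF → VB // F.edgeImage h = K} := by
  classical
  simp only [Nat.card_eq_fintype_card, Fintype.card_subtype]
  rw [Finset.card_eq_sum_card_fiberwise (f := F.edgeImage) (t := J.powerset)
    fun h hh => Finset.mem_powerset.mpr (Finset.mem_filter.mp hh).2]
  refine Finset.sum_congr rfl fun K hK => congrArg Finset.card ?_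
  ext h
  simp only [Finset.mem_filter, Finset.mem_univ, true_and, and_iff_right_iff_imp]
  exact fun hh => hh ▸ Finset.mem_powerset.mp hK

end Hypergraph'

lemma Finset.eq_of_forall_sum_powerset_eq {α M : Type*} [AddCancelCommMonoid M]
    {S : Finset α} {a b : Finset α → M}
    (h : ∀ J ⊆ S, ∑ K ∈ J.powerset, a K = ∑ K ∈ J.powerset, b K) :
    ∀ J ⊆ S, a J = b J := by
  classical
  intro J
  induction J using Finset.strongInduction with
  | _ J ih =>
    intro hJ
    have hsum := h J hJ
    rw [← Finset.sum_erase_add _ _ (Finset.mem_powerset_self J),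
      ← Finset.sum_erase_add _ b (Finset.mem_powerset_self J)] at hsum
    have hproper : ∑ K ∈ J.powerset.erase J, a K = ∑ K ∈ J.powerset.erase J, b K := by
      refine Finset.sum_congr rfl fun K hK => ?_
      obtain ⟨hKJ, hK⟩ := Finset.mem_erase.mp hK
      have hK := Finset.mem_powerset.mp hK
      exact ih K (ssubset_of_ne_of_subset hKJ hK) (hK.trans hJ)
    rw [hproper] at hsum
    exact add_left_cancel hsum

namespace Hypergraph'

variable {VF VH VB : Type} [Fintype VF] [Fintype VH] [Fintype VB] [DecidableEq VB]

lemma card_edgeImage_eq_of_homCount_induce_eq {F : Hypergraph' VF} {H : Hypergraph' VH}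
    (hF : F.NoIsolated) (hH : H.NoIsolated) {B : Hypergraph' VB}
    (hcount : ∀ J ⊆ B.edges, homCount F (B.induce J) = homCount H (B.induce J)) :
    ∀ J ⊆ B.edges, Nat.card {h : VF → VB // F.edgeImage h = J} =
      Nat.card {h : VH → VB // H.edgeImage h = J} := by
  refine Finset.eq_of_forall_sum_powerset_eq fun J hJ => ?_
  rw [← card_edgeImage_subset, ← card_edgeImage_subset, ← homCount_induce hF,
    ← homCount_induce hH]
  exact hcount J hJ

lemma exists_edgeImage_eq_of_homCount_induce_eq [DecidableEq VF] {F : Hypergraph' VF}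
    {H : Hypergraph' VH} (hF : F.NoIsolated) (hH : H.NoIsolated)
    (hcount : ∀ J ⊆ F.edges, homCount F (F.induce J) = homCount H (F.induce J)) :
    ∃ g : VH → VF, H.edgeImage g = F.edges := by
  have hid : 0 < Nat.card {h : VF → VF // F.edgeImage h = F.edges} :=
    Nat.card_pos_iff.mpr ⟨⟨⟨id, edgeImage_id⟩⟩, inferInstance⟩
  rw [card_edgeImage_eq_of_homCount_induce_eq hF hH hcount F.edges subset_rfl] at hid
  obtain ⟨⟨g, hg⟩⟩ := (Nat.card_pos_iff.mp hid).1
  exact ⟨g, hg⟩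

end Hypergraph'

open Hypergraph' in
theorem stmt_3_general {VF VH : Type} [Fintype VF] [Fintype VH] [DecidableEq VF] [DecidableEq VH]
    (F : Hypergraph' VF) (H : Hypergraph' VH)
    (hFiso : F.NoIsolated) (hHiso : H.NoIsolated)
    (hniso : ¬ IsIso F H) :
    (∃ J ⊆ F.edges, homCount F (F.induce J) ≠ homCount H (F.induce J)) ∨
    (∃ J ⊆ H.edges, homCount F (H.induce J) ≠ homCount H (H.induce J)) := by
  by_contra! hc
  obtain ⟨g, hg⟩ := exists_edgeImage_eq_of_homCount_induce_eq hFiso hHiso hc.1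
  obtain ⟨f, hf⟩ := exists_edgeImage_eq_of_homCount_induce_eq hHiso hFiso
    fun J hJ => (hc.2 J hJ).symm
  exact hniso (isIso_of_edgeImage_eq hFiso hHiso hf hg)

/-- if `F` and `H` are non-isomorphic `r`-uniform hypergraphs without
isolated vertices, then some edge-induced sub-hypergraph `X` of `F` or of `H`
distinguishes them by homomorphism counts: `#Hom(F → X) ≠ #Hom(H → X)`. -/
theorem stmt_3 {VF VH : Type} [Fintype VF] [Fintype VH] [DecidableEq VF] [DecidableEq VH]
    (r : ℕ) (F : Hypergraph' VF) (H : Hypergraph' VH)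
    (hF : F.Uniform r) (hH : H.Uniform r)
    (hFiso : F.NoIsolated) (hHiso : H.NoIsolated)
    (hniso : ¬ IsIso F H) :
    (∃ J ⊆ F.edges, homCount F (F.induce J) ≠ homCount H (F.induce J)) ∨
    (∃ J ⊆ H.edges, homCount F (H.induce J) ≠ homCount H (H.induce J)) :=
  stmt_3_general F H hFiso hHiso hniso
end

section
/- Every 4-regular graph contains a 2-regular spanning subgraph (a 2-factor). -/
/-!
Every vertex has even degree, so the edge set splits into cycles (an edge `uv` lies on a cycle
because after deleting it, `u` and `v` are the only odd vertices and by the handshake lemma in the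
component of `u` they must be connected). Orienting every cycle along itself gives an orientation
with two outgoing and two incoming arcs at each vertex. The bipartite out-arc relation is then
2-regular, so Hall's theorem yields a permutation `σ` with every `v → σ v` an arc, and the edges
`{v, σ v}` form the 2-factor: `σ v ≠ σ⁻¹ v` because no edge is oriented both ways.
-/

open Finset

theorem exists_injective_forall_rel_of_ncard_le {α β : Type*} [Fintype α] [Finite β]
    (r : α → β → Prop) {k : ℕ} (hk : 0 < k) (hout : ∀ a, k ≤ {b | r a b}.ncard)
    (hin : ∀ b, {a | r a b}.ncard ≤ k) :
    ∃ f : α → β, Function.Injective f ∧ ∀ a, r a (f a) := by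
  classical
  have := Fintype.ofFinite β
  have hall : ∀ s : Finset α, #s ≤ #(s.biUnion fun a => {b | r a b}) := fun s => by
    refine le_of_mul_le_mul_right (card_mul_le_card_mul r (fun a ha => ?_) (fun b _ => ?_)) hk
    · have : (s.biUnion fun a => {b | r a b}).bipartiteAbove r a = ({b | r a b} : Finset β) := by
        ext b
        simp only [bipartiteAbove, mem_filter, mem_biUnion, mem_univ, true_and,
          and_iff_right_iff_imp]
        exact fun hb => ⟨a, ha, hb⟩
      simpa [this, ← Set.ncard_coe_finset] using hout a
    · calc #(s.bipartiteBelow r b) ≤ #({a | r a b} : Finset α) :=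
            card_le_card (filter_subset_filter _ (subset_univ s))
        _ ≤ k := by simpa [← Set.ncard_coe_finset] using hin b
  obtain ⟨f, hf, hfr⟩ := (all_card_le_biUnion_card_iff_exists_injective _).mp hall
  exact ⟨f, hf, fun a => by simpa using hfr a⟩

theorem List.Nodup.ncard_setOf_prodMk_mem {α β : Type*} [DecidableEq α] {L : List (α × β)}
    (hL : L.Nodup) (a : α) : {b | (a, b) ∈ L}.ncard = (L.map Prod.fst).count a := by
  induction L with
  | nil => simp
  | cons p L ih =>
    obtain ⟨a', b'⟩ := p
    obtain ⟨hp, hL⟩ := List.nodup_cons.mp hL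
    by_cases ha : a' = a
    · subst ha
      have hfin : {b | (a', b) ∈ L}.Finite :=
        (L.map Prod.snd).finite_toSet.subset fun b hb => List.mem_map.mpr ⟨_, hb, rfl⟩
      have : {b | (a', b) ∈ (a', b') :: L} = insert b' {b | (a', b) ∈ L} := by
        ext b
        simp [eq_comm]
      rw [this, Set.ncard_insert_of_notMem (show b' ∉ {b | (a', b) ∈ L} from hp) hfin, ih hL,
        List.map_cons, List.count_cons_self]
    · have : {b | (a, b) ∈ (a', b') :: L} = {b | (a, b) ∈ L} := by
        ext b
        simp [Ne.symm ha]
      rw [this, ih hL, List.map_cons, List.count_cons_of_ne ha]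

namespace SimpleGraph

variable {V : Type*}

theorem ncard_neighborSet_eq_degree (G : SimpleGraph V) {v : V} [Fintype (G.neighborSet v)] :
    (G.neighborSet v).ncard = G.degree v := by
  rw [← card_neighborSet_eq_degree, Set.ncard_eq_toFinset_card', Set.toFinset_card]

theorem exists_ne_reachable_odd_ncard_neighborSet [Finite V] (G : SimpleGraph V) {u : V}
    (hu : Odd (G.neighborSet u).ncard) :
    ∃ w ≠ u, G.Reachable u w ∧ Odd (G.neighborSet w).ncard := by
  classical
  have := Fintype.ofFinite V
  let S := (G.connectedComponentMk u).supp
  have hS : ∀ w : S, G.neighborSet w ⊆ S := fun w _ hw =>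
    (G.connectedComponentMk u).mem_supp_of_adj_mem_supp w.2 hw
  have hdeg : ∀ w : S, (G.induce S).degree w = G.degree w := fun w =>
    degree_induce_of_neighborSet_subset (hS w)
  rw [ncard_neighborSet_eq_degree] at hu
  obtain ⟨⟨w, hw⟩, hwu, hodd⟩ :=
    (G.induce S).exists_ne_odd_degree_of_exists_odd_degree ⟨u, rfl⟩ (by rwa [hdeg])
  refine ⟨w, fun h => hwu (Subtype.ext h), ConnectedComponent.exact hw.symm, ?_⟩
  rwa [ncard_neighborSet_eq_degree, ← hdeg ⟨w, hw⟩]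

theorem ncard_neighborSet_sdiff_add [Finite V] {G H : SimpleGraph V} (h : H ≤ G) (v : V) :
    ((G \ H).neighborSet v).ncard + (H.neighborSet v).ncard = (G.neighborSet v).ncard := by
  rw [neighborSet_sdiff, Set.ncard_sdiff_add_ncard_of_subset
    (show H.neighborSet v ⊆ G.neighborSet v from fun w hw => h hw)]

theorem exists_isCycle_of_forall_even [Finite V] {G : SimpleGraph V} (hG : G ≠ ⊥)
    (h : ∀ v, Even (G.neighborSet v).ncard) : ∃ (x : V) (c : G.Walk x x), c.IsCycle := by
  obtain ⟨u, v, huv⟩ := ne_bot_iff_exists_adj.mp hG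
  suffices (G.deleteEdges {s(u, v)}).Reachable u v by
    obtain ⟨x, c, hc, -⟩ := adj_and_reachable_delete_edges_iff_exists_cycle.mp ⟨huv, this⟩
    exact ⟨x, c, hc⟩
  have hle : edge u v ≤ G := G.edge_le_iff.mpr (.inr huv)
  have hdeg := ncard_neighborSet_sdiff_add hle
  have hu : (edge u v).neighborSet u = {v} := by
    ext w
    simp [edge_adj, eq_comm]
    grind [huv.ne]
  have hw : ∀ w, w ≠ u → w ≠ v → (edge u v).neighborSet w = ∅ := fun w hwu hwv => by
    ext z
    simp [edge_adj, hwu, hwv]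
  change (G \ edge u v).Reachable u v
  have hodd : Odd ((G \ edge u v).neighborSet u).ncard := by
    have := hdeg u
    rw [hu, Set.ncard_singleton] at this
    rw [← Nat.not_even_iff_odd, ← Nat.even_add_one, this]
    exact h u
  obtain ⟨w, hwu, hreach, hwodd⟩ := exists_ne_reachable_odd_ncard_neighborSet _ hodd
  obtain rfl | hwv := eq_or_ne w v
  · exact hreach
  · have := hdeg w
    rw [hw w hwu hwv, Set.ncard_empty, add_zero] at this
    exact absurd (this ▸ h w) (Nat.not_even_iff_odd.mpr hwodd)

structure IsEulerianOrientation (G : SimpleGraph V) (D : V → V → Prop) : Prop where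
  adj_iff : ∀ a b, G.Adj a b ↔ D a b ∨ D b a
  asymm : ∀ a b, D a b → ¬ D b a
  ncard_out_eq_ncard_in : ∀ v, {w | D v w}.ncard = {w | D w v}.ncard

namespace IsEulerianOrientation

variable {G G₁ G₂ : SimpleGraph V} {D D₁ D₂ : V → V → Prop}

theorem bot : IsEulerianOrientation (⊥ : SimpleGraph V) fun _ _ => False where
  adj_iff _ _ := by simp
  asymm _ _ h := h.elim
  ncard_out_eq_ncard_in _ := rfl

theorem adj (h : IsEulerianOrientation G D) {a b : V} (hab : D a b) : G.Adj a b :=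
  (h.adj_iff a b).mpr (.inl hab)

theorem neighborSet_eq_union (h : IsEulerianOrientation G D) (v : V) :
    G.neighborSet v = {w | D v w} ∪ {w | D w v} :=
  Set.ext fun w => h.adj_iff v w

theorem ncard_neighborSet [Finite V] (h : IsEulerianOrientation G D) (v : V) :
    (G.neighborSet v).ncard = 2 * {w | D v w}.ncard := by
  have hdisj : Disjoint {w | D v w} {w | D w v} :=
    Set.disjoint_left.mpr fun w hvw hwv => h.asymm v w hvw hwv
  rw [h.neighborSet_eq_union, Set.ncard_union_eq hdisj, ← h.ncard_out_eq_ncard_in, two_mul]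

theorem sup [Finite V] (h₁ : IsEulerianOrientation G₁ D₁) (h₂ : IsEulerianOrientation G₂ D₂)
    (hG : Disjoint G₁ G₂) : IsEulerianOrientation (G₁ ⊔ G₂) fun a b => D₁ a b ∨ D₂ a b := by
  have hG' : ∀ a b, G₁.Adj a b → ¬ G₂.Adj a b := fun a b h₁ab h₂ab =>
    (disjoint_neighborSet.mpr hG a).ne_of_mem h₁ab h₂ab rfl
  refine ⟨fun a b => ?_, fun a b => ?_, fun v => ?_⟩
  · rw [sup_adj, h₁.adj_iff, h₂.adj_iff]
    tauto
  · rintro (hab | hab) (hba | hba)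
    exacts [h₁.asymm a b hab hba, hG' a b (h₁.adj hab) (h₂.adj hba).symm,
      hG' a b (h₁.adj hba).symm (h₂.adj hab), h₂.asymm a b hab hba]
  · have hout : Disjoint {w | D₁ v w} {w | D₂ v w} :=
      Set.disjoint_left.mpr fun w h₁w h₂w => hG' v w (h₁.adj h₁w) (h₂.adj h₂w)
    have hin : Disjoint {w | D₁ w v} {w | D₂ w v} :=
      Set.disjoint_left.mpr fun w h₁w h₂w => hG' w v (h₁.adj h₁w) (h₂.adj h₂w)
    rw [Set.ofPred_or, Set.ofPred_or, Set.ncard_union_eq hout, Set.ncard_union_eq hin,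
      h₁.ncard_out_eq_ncard_in, h₂.ncard_out_eq_ncard_in]

theorem fromRel_le (h : IsEulerianOrientation G D) {f : V → V} (hf : ∀ v, D v (f v)) :
    fromRel (fun a b => f a = b) ≤ G := by
  rintro a b ⟨-, rfl | rfl⟩
  exacts [h.adj (hf a), (h.adj (hf b)).symm]

end IsEulerianOrientation

theorem Walk.count_map_fst_darts_eq [DecidableEq V] {G : SimpleGraph V} {x : V} (c : G.Walk x x)
    (v : V) :
    (c.darts.map (·.fst)).count v = (c.darts.map (·.snd)).count v := by
  have h := congrArg (List.count v) (c.map_fst_darts_append.trans c.cons_map_snd_darts.symm)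
  rw [List.count_append, List.count_cons] at h
  grind

theorem Walk.IsTrail.isEulerianOrientation {G : SimpleGraph V} {x : V} {c : G.Walk x x}
    (hc : c.IsTrail) :
    IsEulerianOrientation c.toSubgraph.spanningCoe fun a b => (a, b) ∈ c.darts.map (·.toProd) := by
  classical
  have hnodup : (c.darts.map (·.toProd)).Nodup :=
    (hc.edges_nodup.of_map _).map fun d d' h => Dart.ext _ _ h
  refine ⟨fun a b => ?_, fun a b => ?_, fun v => ?_⟩
  · rw [Subgraph.spanningCoe_adj, ← Subgraph.mem_edgeSet, Walk.mem_edges_toSubgraph, Walk.edges]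
    simp [dart_edge_eq_mk'_iff, and_or_left, exists_or]
  · simp only [List.mem_map]
    rintro ⟨d, hd, hab⟩ ⟨d', hd', hba⟩
    have hsymm : d' = d.symm := Dart.ext _ _ (by simp [hab, hba])
    have : d = d' := List.inj_on_of_nodup_map hc.edges_nodup hd hd' (by simp [hsymm])
    exact d.symm_ne (hsymm ▸ this).symm
  · have hin : {w | (w, v) ∈ c.darts.map (·.toProd)} =
        {w | (v, w) ∈ (c.darts.map (·.toProd)).map Prod.swap} := by
      ext w
      simp [Prod.ext_iff, and_comm]
    rw [hin, hnodup.ncard_setOf_prodMk_mem,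
      (hnodup.map Prod.swap_injective).ncard_setOf_prodMk_mem]
    simpa [List.map_map, Function.comp_def] using c.count_map_fst_darts_eq v

theorem exists_isEulerianOrientation [Finite V] (G : SimpleGraph V)
    (h : ∀ v, Even (G.neighborSet v).ncard) : ∃ D, IsEulerianOrientation G D := by
  induction G using WellFoundedLT.induction with
  | _ G ih =>
  obtain rfl | hG := eq_or_ne G ⊥
  · exact ⟨_, .bot⟩
  obtain ⟨x, c, hc⟩ := exists_isCycle_of_forall_even hG h
  set C := c.toSubgraph.spanningCoe
  have hCG : C ≤ G := c.toSubgraph.spanningCoe_le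
  have hC : C ≠ ⊥ := ne_bot_iff_exists_adj.mpr ⟨x, c.snd, c.toSubgraph_adj_snd hc.not_nil⟩
  have hDC := hc.isTrail.isEulerianOrientation
  obtain ⟨D, hD⟩ := ih (G \ C) (sdiff_lt hCG hC) fun v => by
    have hv := h v
    rw [← ncard_neighborSet_sdiff_add hCG v, hDC.ncard_neighborSet] at hv
    exact (Nat.even_add.mp hv).mpr (even_two_mul _)
  exact ⟨_, sdiff_sup_cancel hCG ▸ hD.sup hDC disjoint_sdiff_self_left⟩

theorem ncard_neighborSet_fromRel_perm (σ : Equiv.Perm V) (h₁ : ∀ v, σ v ≠ v)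
    (h₂ : ∀ v, σ (σ v) ≠ v) (v : V) : ((fromRel fun a b => σ a = b).neighborSet v).ncard = 2 := by
  have : (fromRel fun a b => σ a = b).neighborSet v = {σ v, σ.symm v} := by
    ext w
    simp only [mem_neighborSet, fromRel_adj, Set.mem_insert_iff, Set.mem_singleton_iff,
      ← Equiv.eq_symm_apply]
    grind
  rw [this, Set.ncard_pair]
  intro h
  exact h₂ v (by rw [h, Equiv.apply_symm_apply])

end SimpleGraph

/-- Petersen, case r = 4: every 4-regular (finite) graph contains a
2-regular spanning subgraph, i.e. a 2-factor. -/
theorem stmt_16 {V : Type} [Fintype V]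
    (F : SimpleGraph V) (hreg : ∀ v : V, (F.neighborSet v).ncard = 4) :
    ∃ F' : SimpleGraph V, F' ≤ F ∧ ∀ v : V, (F'.neighborSet v).ncard = 2 := by
  obtain ⟨D, hD⟩ := F.exists_isEulerianOrientation fun v => by rw [hreg v]; decide
  have hout : ∀ v, {w | D v w}.ncard = 2 := fun v => by
    have := hD.ncard_neighborSet v
    rw [hreg] at this
    omega
  obtain ⟨f, hf, hfD⟩ := exists_injective_forall_rel_of_ncard_le D two_pos (fun v => (hout v).ge)
    fun v => (hD.ncard_out_eq_ncard_in v ▸ hout v).le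
  let σ := Equiv.ofBijective f hf.bijective_of_finite
  have hσ : ∀ v, D v (σ v) := hfD
  refine ⟨_, hD.fromRel_le hσ, SimpleGraph.ncard_neighborSet_fromRel_perm σ
    (fun v h => ?_) (fun v h => ?_)⟩
  · have hv : D v v := (congrArg (D v) h).mp (hσ v)
    exact hD.asymm v v hv hv
  · exact hD.asymm v (σ v) (hσ v) ((congrArg (D (σ v)) h).mp (hσ (σ v)))
end
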